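/- Let s be a string of length n with minimal-rotation prefix p = s[LMSR(s)..LMSR(s)+B−1] (cyclically) for some 1 ≤ B ≤ n/2, and partition positions [0, n) into blocks of length L = ⌊B/4⌋. Define h_i as the smallest position j in block i such that the cyclic substring s[j..j+B−1] equals p (h_i = ∞ if none exists). Then LMSR(s) = h_{i*} for the block i* containing LMSR(s); i.e., LMSR(s) is the leftmost match of p within its own block. -/
import Mathlib


open scoped Classical

def cyc {α : Type*} {n : ℕ} [NeZero n] (s : Fin n → α) (i t : ℕ) : α :=
  s ⟨(i + t) % n, Nat.mod_lt _ (Nat.pos_of_ne_zero (NeZero.ne n))⟩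

def substr {α : Type*} {n : ℕ} [NeZero n] (s : Fin n → α) (i B : ℕ) : List α :=
  List.ofFn (fun t : Fin B => cyc s i t)

def rotFn {α : Type*} {n : ℕ} [NeZero n] (s : Fin n → α) (r : ℕ) : Fin n → α :=
  fun i => cyc s r i

def rotStr {α : Type*} {n : ℕ} [NeZero n] (s : Fin n → α) (k : ℕ) : List α :=
  substr s k n

def IsMinRot {α : Type*} [LinearOrder α] {n : ℕ} [NeZero n] (s : Fin n → α) (k : ℕ) : Prop :=
  k < n ∧ ∀ k' < n, rotStr s k ≤ rotStr s k'

noncomputable def LMSR {α : Type*} [LinearOrder α] {n : ℕ} [NeZero n] (s : Fin n → α) : ℕ :=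
  sInf {k | IsMinRot s k}

noncomputable def SCR {α : Type*} [LinearOrder α] {n : ℕ} [NeZero n] (s : Fin n → α) : List α :=
  rotStr s (LMSR s)

noncomputable def Csens {α : Type*} {n : ℕ} [NeZero n] (s : Fin n → α) : ℕ :=
  sInf {l | 0 < l ∧ ∀ i j : ℕ, i < j → j < n → substr s i l ≠ substr s j l}

def flipS {n : ℕ} (x : Fin n → Bool) (S : Finset (Fin n)) : Fin n → Bool :=
  fun i => if i ∈ S then !(x i) else x i

def HasBS {n : ℕ} (f : (Fin n → Bool) → ℕ) (x : Fin n → Bool) (m : ℕ) : Prop :=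
  ∃ S : Fin m → Finset (Fin n),
    (∀ i j : Fin m, i ≠ j → Disjoint (S i) (S j)) ∧ ∀ i, f (flipS x (S i)) ≠ f x

noncomputable def bs {n : ℕ} (f : (Fin n → Bool) → ℕ) (x : Fin n → Bool) : ℕ :=
  sSup {m | HasBS f x m}

noncomputable def LMSR0 {n : ℕ} [NeZero n] (x : Fin n → Bool) : ℕ := LMSR x % 2

def IsPer {α : Type*} {m : ℕ} (p : Fin m → α) (d : ℕ) : Prop :=
  0 < d ∧ ∀ i : ℕ, ∀ h : i + d < m, p ⟨i, by omega⟩ = p ⟨i + d, h⟩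

noncomputable def period {α : Type*} {m : ℕ} (p : Fin m → α) : ℕ :=
  sInf {d | IsPer p d}

def getZ {α : Type*} {m : ℕ} [NeZero m] (p : Fin m → α) (z : ℤ) : α :=
  p ⟨z.toNat % m, Nat.mod_lt _ (Nat.pos_of_ne_zero (NeZero.ne m))⟩


private lemma ofFn_lt_of_firstDiff {α : Type*} [LinearOrder α] :
    ∀ {n : ℕ} (f g : Fin n → α) (i : ℕ) (hi : i < n),
      (∀ t : ℕ, ∀ ht : t < n, t < i → f ⟨t, ht⟩ = g ⟨t, ht⟩) →
      f ⟨i, hi⟩ < g ⟨i, hi⟩ → List.ofFn f < List.ofFn g := by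
  intro n
  induction n with
  | zero => intro f g i hi; omega
  | succ m IH =>
    intro f g i hi hpre hlt
    rw [List.ofFn_succ, List.ofFn_succ]
    show List.Lex (· < ·) _ _
    match i, hi with
    | 0, _ => exact List.Lex.rel hlt
    | (i' + 1), hi =>
      have h0 : f 0 = g 0 := by
        have := hpre 0 (by omega) (by omega)
        simpa using this
      rw [h0]
      apply List.Lex.cons
      have : List.ofFn (fun t : Fin m => f t.succ) < List.ofFn (fun t : Fin m => g t.succ) := by
        apply IH _ _ i' (by omega)
        · intro t ht htl
          have := hpre (t + 1) (by omega) (by omega)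
          simpa [Fin.succ_mk] using this
        · have := hlt
          simpa [Fin.succ_mk] using this
      exact this

private lemma cyc_congr {α : Type*} {n : ℕ} [NeZero n] (s : Fin n → α) {x y a b : ℕ}
    (h : (x + a) % n = (y + b) % n) : cyc s x a = cyc s y b := by
  unfold cyc
  congr 1
  exact Fin.ext h

private lemma exclusion {α : Type*} [LinearOrder α] {n B : ℕ} [NeZero n] (s : Fin n → α)
    {j : ℕ} (hj : j < LMSR s) (hd : LMSR s - j < B)
    (heq : substr s j B = substr s (LMSR s) B) : False := by
  have hnpos : 0 < n := Nat.pos_of_ne_zero (NeZero.ne n)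
  -- the set of minimal rotations is nonempty
  have hne : {k | IsMinRot s k}.Nonempty := by
    obtain ⟨k0, hk0mem, hk0min⟩ := Finset.exists_min_image (Finset.range n) (rotStr s)
      ⟨0, Finset.mem_range.2 hnpos⟩
    exact ⟨k0, Finset.mem_range.1 hk0mem, fun k' hk' => hk0min k' (Finset.mem_range.2 hk')⟩
  have hmem : IsMinRot s (LMSR s) := Nat.sInf_mem hne
  set k := LMSR s with hkdef
  have hkn : k < n := hmem.1
  set d : ℕ := k - j with hddef
  have hdpos : 0 < d := by omega
  have hdB : d < B := by omega
  -- pointwise consequence of heq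
  have hpt : ∀ t : Fin B, cyc s j t = cyc s k t := by
    have := List.ofFn_inj.1 heq
    intro t; exact congrFun this t
  -- rotation at j in terms of rotation at k
  have hrotj : ∀ t : ℕ, cyc s j t = cyc s k (n - d + t) := by
    intro t
    apply cyc_congr
    rw [show k + (n - d + t) = (j + t) + n by omega, Nat.add_mod_right]
  -- wrap condition
  have hstar : ∀ t : ℕ, t < B → cyc s k (n - d + t) = cyc s k t := by
    intro t ht
    rw [← hrotj t]
    exact hpt ⟨t, ht⟩
  -- reduction for t ≥ d
  have hred : ∀ t : ℕ, d ≤ t → cyc s k (n - d + t) = cyc s k (t - d) := by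
    intro t ht
    apply cyc_congr
    rw [show k + (n - d + t) = (k + (t - d)) + n by omega, Nat.add_mod_right]
  by_cases hper : ∀ t : ℕ, d ≤ t → t < n → cyc s k t = cyc s k (t - d)
  · -- full period: rotation at j equals rotation at k, contradicting minimality of k = sInf
    have hrots : rotStr s j = rotStr s k := by
      unfold rotStr substr
      apply List.ofFn_inj.2
      funext t
      rcases lt_or_ge (t : ℕ) d with h | h
      · rw [hrotj]; exact hstar t (by omega)
      · rw [hrotj, hred t h]
        exact (hper t h t.isLt).symm
    have : IsMinRot s j := ⟨by omega, fun k' hk' => by rw [hrots]; exact hmem.2 k' hk'⟩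
    have : LMSR s ≤ j := Nat.sInf_le this
    omega
  · push_neg at hper
    -- t0 : least position where the period d breaks
    set D : Set ℕ := {t | d ≤ t ∧ t < n ∧ cyc s k t ≠ cyc s k (t - d)} with hDdef
    have hDne : D.Nonempty := by
      obtain ⟨t, h1, h2, h3⟩ := hper
      exact ⟨t, h1, h2, h3⟩
    set t0 := sInf D with ht0def
    have ht0mem : t0 ∈ D := Nat.sInf_mem hDne
    obtain ⟨ht0d, ht0n, ht0ne⟩ := ht0mem
    have ht0min : ∀ t : ℕ, d ≤ t → t < t0 → cyc s k t = cyc s k (t - d) := by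
      intro t h1 h2
      by_contra hc
      exact Nat.notMem_of_lt_sInf h2 ⟨h1, by omega, hc⟩
    rcases lt_or_gt_of_ne ht0ne with hlt | hgt
    · -- cyc s k t0 < cyc s k (t0 - d) : rotation at (k+d) % n is smaller than at k
      have hshift : ∀ t : ℕ, cyc s ((k + d) % n) t = cyc s k (d + t) := by
        intro t
        apply cyc_congr
        rw [Nat.mod_add_mod, add_assoc]
      have hcmp : rotStr s ((k + d) % n) < rotStr s k := by
        unfold rotStr substr
        apply ofFn_lt_of_firstDiff _ _ (t0 - d) (by omega)
        · intro t ht htl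
          simp only
          rw [hshift]
          have := ht0min (d + t) (by omega) (by omega)
          rw [this]
          congr 1
          omega
        · simp only
          rw [hshift, show d + (t0 - d) = t0 by omega]
          exact hlt
      have := hmem.2 ((k + d) % n) (Nat.mod_lt _ hnpos)
      exact absurd hcmp (not_lt.2 this)
    · -- cyc s k (t0 - d) < cyc s k t0 : rotation at j is smaller than at k
      have hcmp : rotStr s j < rotStr s k := by
        unfold rotStr substr
        apply ofFn_lt_of_firstDiff _ _ t0 ht0n
        · intro t ht htl
          simp only
          rw [hrotj]
          rcases lt_or_ge t d with h | h
          · exact hstar t (by omega)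
          · rw [hred t h]
            exact (ht0min t h htl).symm
        · simp only
          rw [hrotj, hred t0 ht0d]
          exact hgt
      have := hmem.2 j (by omega)
      exact absurd hcmp (not_lt.2 this)

theorem stmt19 {α : Type*} [LinearOrder α] {n B : ℕ} [NeZero n] (s : Fin n → α)
    (hB4 : 4 ≤ B) (hBn : 2 * B ≤ n) :
    substr s (LMSR s) B = substr s (LMSR s) B ∧
      ∀ j : ℕ, (LMSR s / (B / 4)) * (B / 4) ≤ j → j < LMSR s →
        substr s j B ≠ substr s (LMSR s) B := by
  refine ⟨rfl, fun j hj1 hj2 hne => ?_⟩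
  have hL : 0 < B / 4 := by omega
  have h1 : LMSR s / (B / 4) * (B / 4) + LMSR s % (B / 4) = LMSR s := Nat.div_add_mod' _ _
  have h2 : LMSR s % (B / 4) < B / 4 := Nat.mod_lt _ hL
  have hd : LMSR s - j < B := by omega
  exact exclusion s hj2 hd hne
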